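/- There exists a deterministic reconstruction algorithm for monotone Boolean functions on 3 variables with competitivity exactly 5/2; hence c*_3 = 5/2. -/

import Mathlib

open Finset

/-- A monotone Boolean function on subsets of `{0,…,n-1}`. -/
def MonoBF {n : ℕ} (f : Finset (Fin n) → Bool) : Prop :=
  ∀ ⦃S T : Finset (Fin n)⦄, S ⊆ T → f S ≤ f T

/-- `S` is a minimal upper set of `f`: `f S = 1` and every proper subset has value `0`. -/
def IsMinUpper {n : ℕ} (f : Finset (Fin n) → Bool) (S : Finset (Fin n)) : Prop :=
  f S = true ∧ ∀ T : Finset (Fin n), T ⊂ S → f T = false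

/-- `S` is a maximal lower set of `f`: `f S = 0` and every proper superset has value `1`. -/
def IsMaxLower {n : ℕ} (f : Finset (Fin n) → Bool) (S : Finset (Fin n)) : Prop :=
  f S = false ∧ ∀ T : Finset (Fin n), S ⊂ T → f T = true

instance {n : ℕ} (f : Finset (Fin n) → Bool) : DecidablePred (IsMinUpper f) := by
  intro S; unfold IsMinUpper; infer_instance

instance {n : ℕ} (f : Finset (Fin n) → Bool) : DecidablePred (IsMaxLower f) := by
  intro S; unfold IsMaxLower; infer_instance

/-- The family `𝒰(f)` of minimal upper sets. -/
def upperSets {n : ℕ} (f : Finset (Fin n) → Bool) : Finset (Finset (Fin n)) :=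
  univ.filter (IsMinUpper f)

/-- The family `ℒ(f)` of maximal lower sets. -/
def lowerSets {n : ℕ} (f : Finset (Fin n) → Bool) : Finset (Finset (Fin n)) :=
  univ.filter (IsMaxLower f)

/-- `m(f) = |𝒰(f) ∪ ℒ(f)|`. -/
def mUL {n : ℕ} (f : Finset (Fin n) → Bool) : ℕ :=
  (upperSets f ∪ lowerSets f).card

instance {n : ℕ} : DecidablePred (fun f : Finset (Fin n) → Bool => MonoBF f) := by
  intro f; unfold MonoBF; infer_instance

/-- `b_j(n)`: the number of monotone Boolean functions on `n` variables with `m(f) = j`. -/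
def bCount (n j : ℕ) : ℕ :=
  (univ.filter (fun f : Finset (Fin n) → Bool => MonoBF f ∧ mUL f = j)).card

/-- A deterministic reconstruction algorithm as a binary decision tree: internal nodes
query `f S`, the left branch corresponds to answer `0`, leaves output a function. -/
inductive DTree (n : ℕ) where
  | leaf : (Finset (Fin n) → Bool) → DTree n
  | node : Finset (Fin n) → DTree n → DTree n → DTree n

/-- The function output by the tree on input `f`. -/
def DTree.run {n : ℕ} : DTree n → (Finset (Fin n) → Bool) → (Finset (Fin n) → Bool)
  | .leaf g, _ => g
  | .node S t0 t1, f => if f S then t1.run f else t0.run f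

/-- `A(f)`: the number of queries asked on input `f`. -/
def DTree.cost {n : ℕ} : DTree n → (Finset (Fin n) → Bool) → ℕ
  | .leaf _, _ => 0
  | .node S t0 t1, f => (if f S then t1.cost f else t0.cost f) + 1

/-- The tree correctly reconstructs every monotone Boolean function. -/
def Reconstructs {n : ℕ} (t : DTree n) : Prop :=
  ∀ f : Finset (Fin n) → Bool, MonoBF f → t.run f = f

/-- The tree is `c`-competitive: `A(f) ≤ c · m(f)` for every monotone `f`. -/
def Competitive {n : ℕ} (t : DTree n) (c : ℝ) : Prop :=
  ∀ f : Finset (Fin n) → Bool, MonoBF f → (t.cost f : ℝ) ≤ c * mUL f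

/-- `c*_n`, the optimal competitivity on `n` variables. -/
noncomputable def cStar (n : ℕ) : ℝ :=
  sInf {c : ℝ | ∃ t : DTree n, Reconstructs t ∧ Competitive t c}

/-!
A correct tree must query, on the path of a monotone `f`, every set of `𝒰(f) ∪ ℒ(f)`: switching
the value of `f` at a minimal upper or maximal lower set gives another monotone function, which
agrees with `f` everywhere else. A tree that is `c`-competitive with `c < 5/2` would identify the
two constant functions (`m = 1`) with at most two queries and the dictators `S ↦ i ∈ S` (`m = 2`)
with at most four. Two of three dictators answer the first query alike, and so does the constant
with that answer; the constant's second query must be its certificate `univ` or `∅`, which the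
two dictators also answer alike. Both dictators then still have to query the two sets `{i}` and
`{i}ᶜ` of their certificate within two more queries, so their common third query lies in both
certificates, which are disjoint once `n ≥ 3`. The matching upper bound is the tree of the paper.
-/

section

variable {n : ℕ}

namespace DTree

def path : DTree n → (Finset (Fin n) → Bool) → List (Finset (Fin n))
  | .leaf _, _ => []
  | .node S t0 t1, f => S :: if f S then t1.path f else t0.path f

theorem path_node (S : Finset (Fin n)) (t0 t1 : DTree n) (f : Finset (Fin n) → Bool) :
    (node S t0 t1).path f = S :: (bif f S then t1 else t0).path f := by
  cases h : f S <;> simp [path, h]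

theorem cost_eq_length_path (t : DTree n) (f : Finset (Fin n) → Bool) :
    t.cost f = (t.path f).length := by
  induction t with
  | leaf => rfl
  | node S t0 t1 ih0 ih1 => cases h : f S <;> simp [cost, path, h, ih0, ih1]

theorem run_eq_of_eqOn_path (t : DTree n) {f g : Finset (Fin n) → Bool}
    (h : ∀ S ∈ t.path f, f S = g S) : t.run g = t.run f := by
  induction t with
  | leaf => rfl
  | node S t0 t1 ih0 ih1 =>
    simp only [path, List.mem_cons, forall_eq_or_imp] at h
    obtain ⟨hS, h⟩ := h
    cases hf : f S <;> simp_all [run]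

end DTree

theorem List.eq_or_eq_of_mem_cons_of_length_le_one {α : Type*} {a b q : α} {l : List α}
    (hl : l.length ≤ 1) (hab : a ≠ b) (ha : a ∈ q :: l) (hb : b ∈ q :: l) :
    q = a ∨ q = b := by
  rcases l with _ | ⟨x, _ | ⟨y, l⟩⟩ <;> grind

theorem List.mem_of_mem_append_of_eqOn {α β : Type*} {f g : α → β} {l₁ l₂ : List α}
    {a : α} (h : a ∈ l₁ ++ l₂) (hl₁ : ∀ x ∈ l₁, f x = g x) (ha : f a ≠ g a) : a ∈ l₂ :=
  (List.mem_append.1 h).resolve_left fun h => ha (hl₁ a h)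

section Flip

variable {f : Finset (Fin n) → Bool} {S : Finset (Fin n)}

theorem MonoBF.update_of_isMinUpper (hf : MonoBF f) (hS : IsMinUpper f S) :
    MonoBF (Function.update f S false) := by
  intro A B hAB
  rcases eq_or_ne B S with rfl | hB
  · rcases eq_or_ne A B with rfl | hA
    · exact le_rfl
    · simp [Function.update_of_ne hA, hS.2 A (ssubset_of_subset_of_ne hAB hA)]
  · rw [Function.update_of_ne hB]
    refine le_trans ?_ (hf hAB)
    by_cases hA : A = S <;> simp [hA]

theorem MonoBF.update_of_isMaxLower (hf : MonoBF f) (hS : IsMaxLower f S) :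
    MonoBF (Function.update f S true) := by
  intro A B hAB
  rcases eq_or_ne A S with rfl | hA
  · rcases eq_or_ne A B with rfl | hB
    · exact le_rfl
    · simp [Function.update_of_ne (Ne.symm hB), hS.2 B (ssubset_of_subset_of_ne hAB hB)]
  · rw [Function.update_of_ne hA]
    refine le_trans (hf hAB) ?_
    by_cases hB : B = S <;> simp [hB]

end Flip

namespace Reconstructs

variable {t : DTree n} {f : Finset (Fin n) → Bool} {S : Finset (Fin n)}

theorem exists_mem_path_ne (ht : Reconstructs t) {g : Finset (Fin n) → Bool} (hf : MonoBF f)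
    (hg : MonoBF g) (hfg : f ≠ g) : ∃ S ∈ t.path f, f S ≠ g S := by
  by_contra! h
  exact hfg (by rw [← ht f hf, ← ht g hg, t.run_eq_of_eqOn_path h])

theorem mem_path_of_monoBF_update (ht : Reconstructs t) (hf : MonoBF f) {b : Bool}
    (hb : f S ≠ b) (hg : MonoBF (Function.update f S b)) : S ∈ t.path f := by
  obtain ⟨T, hT, hne⟩ := ht.exists_mem_path_ne hf hg fun h => hb (by simpa using congrFun h S)
  by_contra hS
  exact hne (by rw [Function.update_of_ne (ne_of_mem_of_not_mem hT hS)])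

theorem mem_path_of_isMinUpper (ht : Reconstructs t) (hf : MonoBF f) (hS : IsMinUpper f S) :
    S ∈ t.path f :=
  ht.mem_path_of_monoBF_update hf (by simp [hS.1]) (hf.update_of_isMinUpper hS)

theorem mem_path_of_isMaxLower (ht : Reconstructs t) (hf : MonoBF f) (hS : IsMaxLower f S) :
    S ∈ t.path f :=
  ht.mem_path_of_monoBF_update hf (by simp [hS.1]) (hf.update_of_isMaxLower hS)

end Reconstructs

def dictator (i : Fin n) : Finset (Fin n) → Bool := fun S => decide (i ∈ S)

theorem monoBF_const (b : Bool) : MonoBF fun _ : Finset (Fin n) => b :=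
  fun _ _ _ => le_rfl

theorem monoBF_dictator (i : Fin n) : MonoBF (dictator i) := fun _ _ hST =>
  Bool.le_iff_imp.2 fun h => by simpa [dictator] using hST (by simpa [dictator] using h)

section Certificates

variable {S : Finset (Fin n)}

theorem isMinUpper_const_true_iff : IsMinUpper (fun _ => true) S ↔ S = ∅ := by
  simp only [IsMinUpper, Bool.true_eq_false, imp_false, true_and]
  refine ⟨fun h => by_contra fun hS => h ∅ (empty_ssubset.2 (nonempty_iff_ne_empty.2 hS)), ?_⟩
  rintro rfl T hT
  exact not_ssubset_empty T hT

theorem isMaxLower_const_false_iff : IsMaxLower (fun _ => false) S ↔ S = univ := by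
  simp only [IsMaxLower, Bool.false_eq_true, imp_false, true_and]
  refine ⟨fun h => by_contra fun hS => h univ (ssubset_univ_iff.2 hS), ?_⟩
  rintro rfl T hT
  exact hT.not_subset (subset_univ T)

theorem isMinUpper_dictator_iff {i : Fin n} : IsMinUpper (dictator i) S ↔ S = {i} := by
  constructor
  · rintro ⟨hi, hmin⟩
    by_contra hne
    have := hmin {i} (ssubset_of_subset_of_ne (by simpa [dictator] using hi) (Ne.symm hne))
    simp [dictator] at this
  · rintro rfl
    exact ⟨by simp [dictator], fun T hT => by simp [ssubset_singleton_iff.1 hT, dictator]⟩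

theorem isMaxLower_dictator_iff {i : Fin n} : IsMaxLower (dictator i) S ↔ S = {i}ᶜ := by
  constructor
  · rintro ⟨hi, hmax⟩
    by_contra hne
    have := hmax {i}ᶜ (ssubset_of_subset_of_ne (by simpa [dictator] using hi) hne)
    simp [dictator] at this
  · rintro rfl
    refine ⟨by simp [dictator], fun T hT => ?_⟩
    by_contra hi
    exact hT.not_subset (by simpa [dictator] using hi)

end Certificates

theorem mUL_const (b : Bool) : mUL (fun _ : Finset (Fin n) => b) = 1 := by
  cases b
  · have hU : upperSets (fun _ : Finset (Fin n) => false) = ∅ := by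
      ext S; simp [upperSets, IsMinUpper]
    have hL : lowerSets (fun _ : Finset (Fin n) => false) = {univ} := by
      ext S; simp [lowerSets, isMaxLower_const_false_iff]
    simp [mUL, hU, hL]
  · have hU : upperSets (fun _ : Finset (Fin n) => true) = {∅} := by
      ext S; simp [upperSets, isMinUpper_const_true_iff]
    have hL : lowerSets (fun _ : Finset (Fin n) => true) = ∅ := by
      ext S; simp [lowerSets, IsMaxLower]
    simp [mUL, hU, hL]

theorem singleton_ne_compl_self (i : Fin n) : ({i} : Finset (Fin n)) ≠ {i}ᶜ :=
  have : Nonempty (Fin n) := ⟨i⟩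
  ne_compl_self

theorem mUL_dictator (i : Fin n) : mUL (dictator i) = 2 := by
  have hU : upperSets (dictator i) = {{i}} := by
    ext S; simp [upperSets, isMinUpper_dictator_iff]
  have hL : lowerSets (dictator i) = {{i}ᶜ} := by
    ext S; simp [lowerSets, isMaxLower_dictator_iff]
  rw [mUL, hU, hL, ← insert_eq, card_pair (singleton_ne_compl_self i)]

theorem singleton_ne_compl_singleton (hn : 3 ≤ n) (i j : Fin n) :
    ({i} : Finset (Fin n)) ≠ {j}ᶜ := by
  intro h
  have := congrArg card h
  rw [card_singleton, card_compl, card_singleton, Fintype.card_fin] at this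
  omega

theorem not_singleton_or_compl_of_ne (hn : 3 ≤ n) {i j : Fin n} (hij : i ≠ j)
    {q : Finset (Fin n)} (hi : q = {i} ∨ q = {i}ᶜ) : ¬(q = {j} ∨ q = {j}ᶜ) := by
  rintro (rfl | rfl) <;> rcases hi with h | h
  · exact hij (singleton_inj.1 h).symm
  · exact singleton_ne_compl_singleton hn j i h
  · exact singleton_ne_compl_singleton hn i j h.symm
  · exact hij (singleton_inj.1 (compl_inj_iff.1 h)).symm

namespace Reconstructs

variable {t : DTree n}

theorem exists_mem_path_const (ht : Reconstructs t) (b : Bool) :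
    ∃ Z ∈ t.path (fun _ => b), ∀ i : Fin n, dictator i Z = !b := by
  cases b
  · exact ⟨univ, ht.mem_path_of_isMaxLower (monoBF_const _) (isMaxLower_const_false_iff.2 rfl),
      by simp [dictator]⟩
  · exact ⟨∅, ht.mem_path_of_isMinUpper (monoBF_const _) (isMinUpper_const_true_iff.2 rfl),
      by simp [dictator]⟩

theorem singleton_mem_path_dictator (ht : Reconstructs t) (i : Fin n) :
    {i} ∈ t.path (dictator i) :=
  ht.mem_path_of_isMinUpper (monoBF_dictator i) (isMinUpper_dictator_iff.2 rfl)

theorem compl_singleton_mem_path_dictator (ht : Reconstructs t) (i : Fin n) :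
    {i}ᶜ ∈ t.path (dictator i) :=
  ht.mem_path_of_isMaxLower (monoBF_dictator i) (isMaxLower_dictator_iff.2 rfl)

theorem exists_dictators_common_prefix (hn : 3 ≤ n) (ht : Reconstructs t)
    (hconst : ∀ b : Bool, (t.path fun _ => b).length ≤ 2) :
    ∃ i j : Fin n, i ≠ j ∧ ∃ (S Z : Finset (Fin n)) (w : DTree n),
      dictator i S = dictator j S ∧ dictator i Z = dictator j Z ∧
      ∀ k ∈ [i, j], t.path (dictator k) = [S, Z] ++ w.path (dictator k) := by
  cases t with
  | leaf => simpa [DTree.path] using ht.exists_mem_path_const false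
  | node S t0 t1 =>
  obtain ⟨i, j, hij, hSij⟩ :=
    Fintype.exists_ne_map_eq_of_card_lt (fun i : Fin n => dictator i S)
      (by simp only [Fintype.card_bool, Fintype.card_fin]; omega)
  obtain ⟨Z, hZ, hZd⟩ := ht.exists_mem_path_const (dictator i S)
  have hZS : Z ≠ S := fun h => by simpa [h] using hZd i
  have hlen := hconst (dictator i S)
  generalize hb : dictator i S = b at hZ hZd hlen
  obtain ⟨u, hu⟩ : ∃ u, (bif b then t1 else t0) = u := ⟨_, rfl⟩
  rw [DTree.path_node, hu] at hZ hlen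
  cases u with
  | leaf => simp_all [DTree.path]
  | node Z' u0 u1 =>
  rw [DTree.path_node] at hZ hlen
  obtain rfl : Z = Z' := by simp_all
  refine ⟨i, j, hij, S, Z, bif !b then u1 else u0, hSij, by simp [hZd], fun k hk => ?_⟩
  have hkS : dictator k S = b := by
    simp only [List.mem_cons, List.not_mem_nil, or_false] at hk
    rcases hk with rfl | rfl <;> simp [← hb, hSij]
  simp [DTree.path_node, hkS, hu, hZd]

theorem false_of_short_paths (hn : 3 ≤ n) (ht : Reconstructs t)
    (hconst : ∀ b : Bool, (t.path fun _ => b).length ≤ 2)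
    (hdict : ∀ i, (t.path (dictator i)).length ≤ 4) : False := by
  obtain ⟨i, j, hij, S, Z, w, hS, hZ, hpath⟩ := ht.exists_dictators_common_prefix hn hconst
  have hcert : ∀ k ∈ [i, j], ∀ T ∈ [{k}, {k}ᶜ], T ∈ w.path (dictator k) := by
    intro k hk T hT
    simp only [List.mem_cons, List.not_mem_nil, or_false] at hk hT
    refine List.mem_of_mem_append_of_eqOn (l₁ := [S, Z]) (f := dictator i) (g := dictator j)
      ?_ (by simp [hS, hZ]) ?_
    · rw [← hpath k (by simp [hk])]
      rcases hT with rfl | rfl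
      · exact ht.singleton_mem_path_dictator k
      · exact ht.compl_singleton_mem_path_dictator k
    · rcases hk with rfl | rfl <;> rcases hT with rfl | rfl <;> simp [dictator, hij, hij.symm]
  cases w with
  | leaf => simpa [DTree.path] using hcert i (by simp) {i} (by simp)
  | node q w0 w1 =>
  have hq : ∀ k ∈ [i, j], q = {k} ∨ q = {k}ᶜ := by
    intro k hk
    have hlen := hdict k
    have h₁ := hcert k hk {k} (by simp)
    have h₂ := hcert k hk {k}ᶜ (by simp)
    rw [hpath k hk] at hlen
    rw [DTree.path_node] at hlen h₁ h₂
    exact List.eq_or_eq_of_mem_cons_of_length_le_one (by simp at hlen; omega)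
      (singleton_ne_compl_self k) h₁ h₂
  exact not_singleton_or_compl_of_ne hn hij (hq i (by simp)) (hq j (by simp))

end Reconstructs

theorem five_halves_le_of_competitive (hn : 3 ≤ n) {t : DTree n} (ht : Reconstructs t) {c : ℝ}
    (hc : Competitive t c) : 5 / 2 ≤ c := by
  by_contra! hlt
  refine ht.false_of_short_paths hn (fun b => ?_) (fun i => ?_)
  · have h := hc _ (monoBF_const b)
    rw [mUL_const, Nat.cast_one, mul_one] at h
    have : (t.cost fun _ => b) < 3 := by
      exact_mod_cast (by linarith : ((t.cost fun _ => b) : ℝ) < 3)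
    rw [← DTree.cost_eq_length_path]
    omega
  · have h := hc _ (monoBF_dictator i)
    rw [mUL_dictator, Nat.cast_two] at h
    have : t.cost (dictator i) < 5 := by
      exact_mod_cast (by linarith : (t.cost (dictator i) : ℝ) < 5)
    rw [← DTree.cost_eq_length_path]
    omega

end

def ofMinUpper {n : ℕ} (𝒰 : List (Finset (Fin n))) : Finset (Fin n) → Bool :=
  fun S => 𝒰.any (· ⊆ S)

-- The paper's tree, with variables `0, 1, 2` for its `1, 2, 3`; each leaf is labelled by the
-- minimal upper sets `𝒰(f)` of the function it outputs.
def optimalTree : DTree 3 :=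
  .node {0, 1}
    (.node univ
      (.leaf (ofMinUpper []))
      (.node {2}
        (.node {0, 2}
          (.node {1, 2}
            (.leaf (ofMinUpper [univ]))
            (.leaf (ofMinUpper [{1, 2}])))
          (.node {1, 2}
            (.leaf (ofMinUpper [{0, 2}]))
            (.leaf (ofMinUpper [{0, 2}, {1, 2}]))))
        (.leaf (ofMinUpper [{2}]))))
    (.node ∅
      (.node {0}
        (.node {1}
          (.node {2}
            (.node {0, 2}
              (.node {1, 2}
                (.leaf (ofMinUpper [{0, 1}]))
                (.leaf (ofMinUpper [{0, 1}, {1, 2}])))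
              (.node {1, 2}
                (.leaf (ofMinUpper [{0, 1}, {0, 2}]))
                (.leaf (ofMinUpper [{0, 1}, {0, 2}, {1, 2}]))))
            (.leaf (ofMinUpper [{0, 1}, {2}])))
          (.node {0, 2}
            (.leaf (ofMinUpper [{1}]))
            (.node {2}
              (.leaf (ofMinUpper [{1}, {0, 2}]))
              (.leaf (ofMinUpper [{1}, {2}])))))
        (.node {1}
          (.node {1, 2}
            (.leaf (ofMinUpper [{0}]))
            (.node {2}
              (.leaf (ofMinUpper [{0}, {1, 2}]))
              (.leaf (ofMinUpper [{0}, {2}]))))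
          (.node {2}
            (.leaf (ofMinUpper [{0}, {1}]))
            (.leaf (ofMinUpper [{0}, {1}, {2}])))))
      (.leaf (ofMinUpper [∅])))

set_option maxRecDepth 10000 in
theorem optimalTree_run_and_cost_le : ∀ f : Finset (Fin 3) → Bool, MonoBF f →
    optimalTree.run f = f ∧ 2 * optimalTree.cost f ≤ 5 * mUL f := by
  decide

theorem reconstructs_optimalTree : Reconstructs optimalTree :=
  fun f hf => (optimalTree_run_and_cost_le f hf).1

theorem competitive_optimalTree : Competitive optimalTree (5 / 2) := fun f hf => by
  have h : ((2 * optimalTree.cost f : ℕ) : ℝ) ≤ (5 * mUL f : ℕ) := by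
    exact_mod_cast (optimalTree_run_and_cost_le f hf).2
  push_cast at h
  linarith

theorem optimalTree_cost_dictator : optimalTree.cost (dictator 0) = 5 := by
  decide

/-- There is a reconstruction algorithm on `3` variables with competitivity exactly
`5/2`; hence `c*_3 = 5/2`. -/
theorem stmt17 :
    (∃ t : DTree 3, Reconstructs t ∧ Competitive t (5 / 2) ∧
      ∃ f : Finset (Fin 3) → Bool, MonoBF f ∧ (t.cost f : ℝ) = 5 / 2 * mUL f) ∧
    cStar 3 = 5 / 2 := by
  have hlow : 5 / 2 ∈ lowerBounds {c : ℝ | ∃ t : DTree 3, Reconstructs t ∧ Competitive t c} :=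
    fun _ ⟨_, ht, hc⟩ => five_halves_le_of_competitive le_rfl ht hc
  refine ⟨⟨optimalTree, reconstructs_optimalTree, competitive_optimalTree,
    dictator 0, monoBF_dictator 0, ?_⟩, IsLeast.csInf_eq
      ⟨⟨optimalTree, reconstructs_optimalTree, competitive_optimalTree⟩, hlow⟩⟩
  rw [optimalTree_cost_dictator, mUL_dictator]
  norm_num
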